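/- (Convergence to stationarity, expected squared gradient norm.) Let (Ω, 𝒜, P) be a probability space with a filtration (ℱ_t)_{t∈ℕ}. Let L : ℝ^d → ℝ be continuously differentiable, bounded below, with β-Lipschitz gradient for some β > 0. Let (φ_t) be random vectors in ℝ^d with φ_t ℱ_t-measurable, and (g_t) random vectors with g_t ℱ_{t+1}-measurable, satisfying the recursion φ_{t+1} = φ_t − η_t g_t for deterministic step sizes η_t with 0 < η_t ≤ 1/β, η_t → 0, Σ_t η_t = ∞, and Σ_t η_t² < ∞. Assume, for all t: E[g_t | ℱ_t] = ∇L(φ_t) almost surely; E[‖g_t − ∇L(φ_t)‖² | ℱ_t] ≤ v almost surely for a constant v ≥ 0; ‖g_t‖ ≤ G almost surely for a constant G ≥ 0; and there is a constant C_∇ ≥ 0 with ‖∇L(φ_t)‖ ≤ C_∇ almost surely for all t. Then lim_{t→∞} E[‖∇L(φ_t)‖²] = 0. -/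

import Mathlib

open MeasureTheory Filter Finset
open scoped RealInnerProductSpace Topology

/-!
Along the recursion the descent lemma gives, pathwise,
`∑ η t ⟪∇L (φ t), g t⟫ ≤ L (φ 0) - inf L + β G² ∑ η t²`. Since `∇L (φ t)` is `ℱ t`-measurable
and `g t` is conditionally unbiased, integrating over an `ℱ 0`-event `A` replaces
`⟪∇L (φ t), g t⟫` by `‖∇L (φ t)‖²`. On `A = {L (φ 0) ≤ R}` the sequence
`a t = ∫_A ‖∇L (φ t)‖²` therefore satisfies `∑ η t a t < ∞`, while the Lipschitz gradient makes
`|a (t + 1) - a t| = O(η t)`; with `∑ η t = ∞` this forces `a t → 0`. The truncation is needed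
because `L (φ 0)` need not be integrable; as `R → ∞` the events exhaust `Ω`, and the bound on
`‖∇L (φ t)‖` makes the remaining mass uniformly small.
-/

theorem sub_mul_sum_Ico_le_of_abs_sub_le {a η : ℕ → ℝ} {K : ℝ}
    (hstep : ∀ t, |a (t + 1) - a t| ≤ K * η t) {N s : ℕ} (hNs : N ≤ s) :
    a N - K * ∑ t ∈ Ico N s, η t ≤ a s := by
  induction s, hNs using Nat.le_induction with
  | base => simp
  | succ s hNs ih =>
    rw [sum_Ico_succ_top hNs, mul_add]
    linarith [(abs_le.mp (hstep s)).1]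

theorem tendsto_zero_of_summable_mul_of_abs_sub_le {a η : ℕ → ℝ} {K : ℝ} (ha : ∀ t, 0 ≤ a t)
    (hη : ∀ t, 0 ≤ η t) (hstep : ∀ t, |a (t + 1) - a t| ≤ K * η t)
    (hsum : Summable fun t => η t * a t)
    (hdiv : Tendsto (fun n => ∑ t ∈ range n, η t) atTop atTop) :
    Tendsto a atTop (𝓝 0) := by
  set K' := max K 0 + 1
  have hK' : 0 < K' := by positivity
  have hstep' (t : ℕ) : |a (t + 1) - a t| ≤ K' * η t :=
    (hstep t).trans <| mul_le_mul_of_nonneg_right (by grind) (hη t)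
  rw [Metric.tendsto_atTop]
  intro ε hε
  by_contra! hcon
  -- From a time `N ≥ N₀` with `a N ≥ ε`, the first window `[N, M)` of `η`-mass `≥ c` keeps
  -- `a ≥ ε / 2`, so it contributes `≥ ε c / 2` to the series, more than its tail allows.
  set c := ε / (2 * K')
  have hterm_nonneg (t : ℕ) : 0 ≤ η t * a t := mul_nonneg (hη t) (ha t)
  have htail (N M : ℕ) : ∑ t ∈ Ico N M, η t * a t ≤ ∑' k, η (k + N) * a (k + N) := by
    simp_rw [sum_Ico_eq_sum_range, add_comm N]
    exact ((summable_nat_add_iff N).2 hsum).sum_le_tsum _ fun k _ => hterm_nonneg _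
  obtain ⟨N₀, hN₀⟩ := ((tendsto_sum_nat_add fun t => η t * a t).eventually
    (gt_mem_nhds (show 0 < ε * c / 2 by positivity))).exists_forall_of_atTop
  obtain ⟨N, hN, haN⟩ := hcon N₀
  rw [Real.dist_0_eq_abs, abs_of_nonneg (ha N)] at haN
  have hex : ∃ M, c ≤ ∑ t ∈ Ico N M, η t := by
    obtain ⟨M, hM, hNM⟩ := ((hdiv.eventually_ge_atTop (c + ∑ t ∈ range N, η t)).and
      (eventually_ge_atTop N)).exists
    refine ⟨M, ?_⟩
    rw [← sum_range_add_sum_Ico _ hNM] at hM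
    linarith
  set M := Nat.find hex
  have hlarge : ∀ s ∈ Ico N M, ε / 2 ≤ a s := by
    intro s hs
    obtain ⟨hNs, hsM⟩ := mem_Ico.mp hs
    have hmass : ∑ t ∈ Ico N s, η t < c := not_le.mp (Nat.find_min hex hsM)
    have hKc : K' * c = ε / 2 := by simp only [c]; field_simp
    nlinarith [sub_mul_sum_Ico_le_of_abs_sub_le hstep' hNs]
  have hwin : ε * c / 2 ≤ ∑ t ∈ Ico N M, η t * a t :=
    calc ε * c / 2 ≤ ε / 2 * ∑ t ∈ Ico N M, η t := by nlinarith [Nat.find_spec hex]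
      _ = ∑ t ∈ Ico N M, η t * (ε / 2) := by rw [mul_sum]; simp_rw [mul_comm]
      _ ≤ _ := sum_le_sum fun t ht => mul_le_mul_of_nonneg_left (hlarge t ht) (hη t)
  linarith [htail N M, hN₀ N hN]

theorem abs_norm_sq_sub_norm_sq_le {E : Type*} [SeminormedAddCommGroup E] {a b : E} {C : ℝ}
    (ha : ‖a‖ ≤ C) (hb : ‖b‖ ≤ C) : |‖a‖ ^ 2 - ‖b‖ ^ 2| ≤ 2 * C * ‖a - b‖ := by
  rw [sq_sub_sq, abs_mul, abs_of_nonneg (by positivity : 0 ≤ ‖a‖ + ‖b‖)]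
  exact mul_le_mul (by linarith) (abs_norm_sub_norm_le a b) (abs_nonneg _)
    (by linarith [norm_nonneg a])

section Descent

variable {E : Type*} [NormedAddCommGroup E] [InnerProductSpace ℝ E] [CompleteSpace E]
  {L : E → ℝ} {β : ℝ}

theorem le_add_inner_gradient_add_mul_norm_sq (hL : Differentiable ℝ L) (hβ : 0 ≤ β)
    (hLip : ∀ x y, ‖gradient L x - gradient L y‖ ≤ β * ‖x - y‖) (x y : E) :
    L y ≤ L x + ⟪gradient L x, y - x⟫ + β * ‖y - x‖ ^ 2 := by
  have hbound : ∀ z ∈ segment ℝ x y, ‖fderiv ℝ L z - fderiv ℝ L x‖ ≤ β * ‖y - x‖ := by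
    intro z hz
    calc ‖fderiv ℝ L z - fderiv ℝ L x‖ = ‖gradient L z - gradient L x‖ := by
          rw [gradient, gradient, ← map_sub, LinearIsometryEquiv.norm_map]
      _ ≤ β * ‖z - x‖ := hLip z x
      _ ≤ β * ‖y - x‖ := mul_le_mul_of_nonneg_left (norm_sub_le_of_mem_segment hz) hβ
  have hmvt := (convex_segment x y).norm_image_sub_le_of_norm_fderiv_le' (fun z _ => hL z)
    hbound (left_mem_segment ℝ x y) (right_mem_segment ℝ x y)
  have hinner : ⟪gradient L x, y - x⟫ = fderiv ℝ L x (y - x) :=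
    InnerProductSpace.toDual_symm_apply
  rw [Real.norm_eq_abs, abs_le] at hmvt
  rw [hinner]
  linarith [hmvt.2]

theorem add_sum_mul_inner_gradient_le (hL : Differentiable ℝ L) (hβ : 0 ≤ β)
    (hLip : ∀ x y, ‖gradient L x - gradient L y‖ ≤ β * ‖x - y‖) {x g : ℕ → E} {η : ℕ → ℝ}
    (hrec : ∀ t, x (t + 1) = x t - η t • g t) (n : ℕ) :
    L (x n) + ∑ t ∈ range n, η t * ⟪gradient L (x t), g t⟫
      ≤ L (x 0) + β * ∑ t ∈ range n, η t ^ 2 * ‖g t‖ ^ 2 := by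
  induction n with
  | zero => simp
  | succ n ih =>
    have hdescent := le_add_inner_gradient_add_mul_norm_sq hL hβ hLip (x n) (x (n + 1))
    rw [hrec n, sub_sub_cancel_left, inner_neg_right, real_inner_smul_right, norm_neg, norm_smul,
      Real.norm_eq_abs, mul_pow, sq_abs, ← hrec n] at hdescent
    rw [sum_range_succ, sum_range_succ]
    linarith

theorem sum_mul_inner_gradient_le (hL : Differentiable ℝ L) (hβ : 0 ≤ β)
    (hLip : ∀ x y, ‖gradient L x - gradient L y‖ ≤ β * ‖x - y‖) {x g : ℕ → E} {η : ℕ → ℝ}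
    (hrec : ∀ t, x (t + 1) = x t - η t • g t) {m G : ℝ} (hm : ∀ z, m ≤ L z)
    (hG : ∀ t, ‖g t‖ ≤ G) (hη : Summable fun t => η t ^ 2) (n : ℕ) :
    ∑ t ∈ range n, η t * ⟪gradient L (x t), g t⟫ ≤ L (x 0) - m + β * G ^ 2 * ∑' t, η t ^ 2 := by
  have hsq : ∑ t ∈ range n, η t ^ 2 * ‖g t‖ ^ 2 ≤ G ^ 2 * ∑' t, η t ^ 2 := by
    calc ∑ t ∈ range n, η t ^ 2 * ‖g t‖ ^ 2 ≤ ∑ t ∈ range n, η t ^ 2 * G ^ 2 := by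
          gcongr with t; exact hG t
      _ ≤ G ^ 2 * ∑' t, η t ^ 2 := by
          rw [← sum_mul, mul_comm]
          gcongr
          exact hη.sum_le_tsum _ fun t _ => sq_nonneg _
  linarith [add_sum_mul_inner_gradient_le hL hβ hLip hrec n, hm (x n),
    mul_le_mul_of_nonneg_left hsq hβ]

theorem abs_norm_sq_gradient_sub_le_of_eq_sub_smul (hβ : 0 ≤ β)
    (hLip : ∀ x y, ‖gradient L x - gradient L y‖ ≤ β * ‖x - y‖) {x x' g : E} {η C G : ℝ}
    (hrec : x' = x - η • g) (hx' : ‖gradient L x'‖ ≤ C) (hx : ‖gradient L x‖ ≤ C)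
    (hg : ‖g‖ ≤ G) (hη : 0 ≤ η) :
    |‖gradient L x'‖ ^ 2 - ‖gradient L x‖ ^ 2| ≤ 2 * C * β * G * η := by
  have hC : 0 ≤ C := (norm_nonneg _).trans hx
  calc |‖gradient L x'‖ ^ 2 - ‖gradient L x‖ ^ 2| ≤ 2 * C * ‖gradient L x' - gradient L x‖ :=
        abs_norm_sq_sub_norm_sq_le hx' hx
    _ ≤ 2 * C * (β * (η * ‖g‖)) := by
        gcongr
        simpa [hrec, norm_smul, abs_of_nonneg hη] using hLip x' x
    _ ≤ 2 * C * β * G * η := by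
        linarith [mul_le_mul_of_nonneg_left hg (mul_nonneg (mul_nonneg hC hβ) hη)]

end Descent

theorem setIntegral_inner_eq_of_condExp_ae_eq {Ω E : Type*} [NormedAddCommGroup E]
    [InnerProductSpace ℝ E] [CompleteSpace E] {m m₀ : MeasurableSpace Ω} {μ : Measure Ω}
    (hm : m ≤ m₀) [SigmaFinite (μ.trim hm)] {X Y Z : Ω → E} (hX : StronglyMeasurable[m] X)
    (hXY : Integrable (fun ω => ⟪X ω, Y ω⟫) μ) (hY : Integrable Y μ) (hYZ : μ[Y | m] =ᵐ[μ] Z)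
    {A : Set Ω} (hA : MeasurableSet[m] A) :
    ∫ ω in A, ⟪X ω, Y ω⟫ ∂μ = ∫ ω in A, ⟪X ω, Z ω⟫ ∂μ := by
  rw [← setIntegral_condExp hm hXY hA]
  refine setIntegral_congr_ae (hm A hA) ?_
  filter_upwards [condExp_bilin_of_stronglyMeasurable_left (innerSL ℝ) hX hXY hY, hYZ]
    with ω hpull hZ _
  rw [← hZ]
  exact hpull

section FiniteMeasure

variable {Ω : Type*} {m₀ : MeasurableSpace Ω} {μ : Measure Ω} [IsFiniteMeasure μ]

theorem integrable_inner_of_norm_le {E : Type*} [NormedAddCommGroup E] [InnerProductSpace ℝ E]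
    {X Y : Ω → E} {C G : ℝ} (hX : AEStronglyMeasurable X μ) (hY : AEStronglyMeasurable Y μ)
    (hXC : ∀ᵐ ω ∂μ, ‖X ω‖ ≤ C) (hYG : ∀ᵐ ω ∂μ, ‖Y ω‖ ≤ G) :
    Integrable (fun ω => ⟪X ω, Y ω⟫) μ := by
  refine .of_bound (hX.inner hY) (C * G) ?_
  filter_upwards [hXC, hYG] with ω hx hy
  exact (norm_inner_le_norm _ _).trans (mul_le_mul hx hy (norm_nonneg _) ((norm_nonneg _).trans hx))

theorem tendsto_integral_of_tendsto_setIntegral {F : Type*} [NormedAddCommGroup F]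
    [NormedSpace ℝ F] {f : ℕ → Ω → F} {C : ℝ} (hf : ∀ t, AEStronglyMeasurable (f t) μ)
    (hbound : ∀ t, ∀ᵐ ω ∂μ, ‖f t ω‖ ≤ C) {A : ℕ → Set Ω} (hA : ∀ R, MeasurableSet (A R))
    (hmono : Monotone A) (hcover : ⋃ R, A R = Set.univ)
    (hlim : ∀ R, Tendsto (fun t => ∫ ω in A R, f t ω ∂μ) atTop (𝓝 0)) :
    Tendsto (fun t => ∫ ω, f t ω ∂μ) atTop (𝓝 0) := by
  have hcompl : Tendsto (fun R => C * μ.real (A R)ᶜ) atTop (𝓝 0) := by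
    have h := tendsto_measure_iInter_atTop (μ := μ) (fun R => (hA R).compl.nullMeasurableSet)
      (fun R R' h => Set.compl_subset_compl.mpr (hmono h)) ⟨0, measure_ne_top μ _⟩
    rw [← Set.compl_iUnion, hcover, Set.compl_univ, measure_empty] at h
    simpa [measureReal_def] using ((ENNReal.tendsto_toReal ENNReal.zero_ne_top).comp h).const_mul C
  rw [Metric.tendsto_atTop]
  intro ε hε
  obtain ⟨R, hR⟩ := (hcompl.eventually (gt_mem_nhds (half_pos hε))).exists
  obtain ⟨N, hN⟩ := Metric.tendsto_atTop.mp (hlim R) (ε / 2) (half_pos hε)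
  refine ⟨N, fun t ht => ?_⟩
  have hrest : ‖∫ ω in (A R)ᶜ, f t ω ∂μ‖ ≤ C * μ.real (A R)ᶜ := by
    simpa using norm_integral_le_of_norm_le_const (μ := μ.restrict (A R)ᶜ)
      (ae_restrict_of_ae (hbound t))
  rw [dist_zero_right, ← integral_add_compl (hA R) (.of_bound (hf t) C (hbound t))]
  have := hN t ht
  rw [dist_zero_right] at this
  linarith [norm_add_le (∫ ω in A R, f t ω ∂μ) (∫ ω in (A R)ᶜ, f t ω ∂μ)]

theorem tendsto_setIntegral_of_sum_mul_le {a b : ℕ → Ω → ℝ} {η : ℕ → ℝ} {A : Set Ω} {R K : ℝ}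
    (hA : MeasurableSet A) (ha : ∀ t, Integrable (a t) μ) (hb : ∀ t, Integrable (b t) μ)
    (hb_nonneg : ∀ t, ∀ᵐ ω ∂μ, 0 ≤ b t ω) (hab : ∀ t, ∫ ω in A, a t ω ∂μ = ∫ ω in A, b t ω ∂μ)
    (hη : ∀ t, 0 ≤ η t) (hdiv : Tendsto (fun n => ∑ t ∈ range n, η t) atTop atTop)
    (hsum : ∀ᵐ ω ∂μ, ω ∈ A → ∀ n, ∑ t ∈ range n, η t * a t ω ≤ R)
    (hstep : ∀ t, ∀ᵐ ω ∂μ, |b (t + 1) ω - b t ω| ≤ K * η t) :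
    Tendsto (fun t => ∫ ω in A, b t ω ∂μ) atTop (𝓝 0) := by
  have hint_nonneg (t : ℕ) : 0 ≤ ∫ ω in A, b t ω ∂μ :=
    integral_nonneg_of_ae (ae_restrict_of_ae (hb_nonneg t))
  refine tendsto_zero_of_summable_mul_of_abs_sub_le hint_nonneg hη (K := K * μ.real A) ?_ ?_ hdiv
  · intro t
    rw [← integral_sub (hb _).restrict (hb t).restrict, ← Real.norm_eq_abs]
    calc ‖∫ ω in A, b (t + 1) ω - b t ω ∂μ‖ ≤ K * η t * (μ.restrict A).real Set.univ :=
          norm_integral_le_of_norm_le_const (ae_restrict_of_ae (hstep t))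
      _ = K * μ.real A * η t := by rw [measureReal_restrict_apply_univ]; ring
  · refine summable_of_sum_range_le (c := R * μ.real A)
      (fun t => mul_nonneg (hη t) (hint_nonneg t)) fun n => ?_
    calc ∑ t ∈ range n, η t * ∫ ω in A, b t ω ∂μ
        = ∫ ω in A, ∑ t ∈ range n, η t * a t ω ∂μ := by
          rw [integral_finsetSum _ fun t _ => ((ha t).const_mul (η t)).restrict]
          simp_rw [integral_const_mul, hab]
      _ ≤ ∫ _ in A, R ∂μ :=
          integral_mono_ae (integrable_finsetSum _ fun t _ => ((ha t).const_mul (η t))).restrict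
            (integrable_const R) ((ae_restrict_iff' hA).mpr (hsum.mono fun ω h hωA => h hωA n))
      _ = R * μ.real A := by rw [setIntegral_const, smul_eq_mul, mul_comm]

theorem tendsto_setIntegral_norm_sq_gradient {E : Type*} [NormedAddCommGroup E]
    [InnerProductSpace ℝ E] [CompleteSpace E] (ℱ : Filtration ℕ m₀) {L : E → ℝ}
    (hL : Differentiable ℝ L) {m : ℝ} (hm : ∀ z, m ≤ L z) {β : ℝ} (hβ : 0 ≤ β)
    (hLip : ∀ x y, ‖gradient L x - gradient L y‖ ≤ β * ‖x - y‖) {φ g : ℕ → Ω → E}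
    (hφ : ∀ t, StronglyMeasurable[ℱ t] fun ω => gradient L (φ t ω))
    (hg : ∀ t, AEStronglyMeasurable (g t) μ) {η : ℕ → ℝ} (hη : ∀ t, 0 ≤ η t)
    (hdiv : Tendsto (fun n => ∑ t ∈ range n, η t) atTop atTop)
    (hη2 : Summable fun t => η t ^ 2) (hrec : ∀ t ω, φ (t + 1) ω = φ t ω - η t • g t ω)
    (hunb : ∀ t, μ[g t | ℱ t] =ᵐ[μ] fun ω => gradient L (φ t ω)) {G C : ℝ}
    (hG : ∀ t, ∀ᵐ ω ∂μ, ‖g t ω‖ ≤ G) (hC : ∀ t, ∀ᵐ ω ∂μ, ‖gradient L (φ t ω)‖ ≤ C)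
    {A : Set Ω} (hA : MeasurableSet[ℱ 0] A) {R : ℝ} (hR : ∀ ω ∈ A, L (φ 0 ω) ≤ R) :
    Tendsto (fun t => ∫ ω in A, ‖gradient L (φ t ω)‖ ^ 2 ∂μ) atTop (𝓝 0) := by
  have hgrad (t : ℕ) : AEStronglyMeasurable (fun ω => gradient L (φ t ω)) μ :=
    ((hφ t).mono (ℱ.le t)).aestronglyMeasurable
  have hinner (t : ℕ) : Integrable (fun ω => ⟪gradient L (φ t ω), g t ω⟫) μ :=
    integrable_inner_of_norm_le (hgrad t) (hg t) (hC t) (hG t)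
  have hsq (t : ℕ) : Integrable (fun ω => ‖gradient L (φ t ω)‖ ^ 2) μ := by
    simpa only [real_inner_self_eq_norm_sq] using
      integrable_inner_of_norm_le (hgrad t) (hgrad t) (hC t) (hC t)
  have hunbiased (t : ℕ) : ∫ ω in A, ⟪gradient L (φ t ω), g t ω⟫ ∂μ
      = ∫ ω in A, ‖gradient L (φ t ω)‖ ^ 2 ∂μ := by
    simpa only [real_inner_self_eq_norm_sq] using setIntegral_inner_eq_of_condExp_ae_eq (ℱ.le t)
      (hφ t) (hinner t) (.of_bound (hg t) G (hG t)) (hunb t) (ℱ.mono (Nat.zero_le t) _ hA)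
  have hdescent : ∀ᵐ ω ∂μ, ω ∈ A → ∀ n, ∑ t ∈ range n, η t * ⟪gradient L (φ t ω), g t ω⟫
      ≤ R - m + β * G ^ 2 * ∑' t, η t ^ 2 := by
    filter_upwards [ae_all_iff.mpr hG] with ω hGω hωA n
    have hpath := sum_mul_inner_gradient_le hL hβ hLip (x := fun t => φ t ω)
      (g := fun t => g t ω) (fun t => hrec t ω) hm hGω hη2 n
    linarith [hR ω hωA]
  have hstep (t : ℕ) : ∀ᵐ ω ∂μ, |‖gradient L (φ (t + 1) ω)‖ ^ 2 - ‖gradient L (φ t ω)‖ ^ 2|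
      ≤ 2 * C * β * G * η t := by
    filter_upwards [hC t, hC (t + 1), hG t] with ω hu hu' hgω
    exact abs_norm_sq_gradient_sub_le_of_eq_sub_smul hβ hLip (hrec t ω) hu' hu hgω (hη t)
  exact tendsto_setIntegral_of_sum_mul_le (ℱ.le 0 _ hA) hinner hsq
    (fun t => ae_of_all _ fun ω => by positivity) hunbiased hη hdiv hdescent hstep

end FiniteMeasure

theorem convergence_to_stationarity_in_expectation_general {d : ℕ}
    {Ω : Type*} {𝒜 : MeasurableSpace Ω} (μ : Measure Ω) [IsProbabilityMeasure μ]
    (ℱ : Filtration ℕ 𝒜)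
    (L : EuclideanSpace ℝ (Fin d) → ℝ) (hLdiff : ContDiff ℝ 1 L)
    (hLbdd : BddBelow (Set.range L))
    (β : ℝ) (hβ : 0 < β)
    (hLip : ∀ x y, ‖gradient L x - gradient L y‖ ≤ β * ‖x - y‖)
    (φ g : ℕ → Ω → EuclideanSpace ℝ (Fin d))
    (hφmeas : ∀ t, Measurable[ℱ t] (φ t))
    (hgmeas : ∀ t, Measurable[ℱ (t + 1)] (g t))
    (η : ℕ → ℝ) (hη0 : ∀ t, 0 < η t)
    (hηdiv : Tendsto (fun n => ∑ t ∈ Finset.range n, η t) atTop atTop)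
    (hη2 : Summable fun t => (η t) ^ 2)
    (hrec : ∀ t ω, φ (t + 1) ω = φ t ω - η t • g t ω)
    (hunb : ∀ t, μ[g t | ℱ t] =ᵐ[μ] fun ω => gradient L (φ t ω))
    (G : ℝ) (hGbd : ∀ t, ∀ᵐ ω ∂μ, ‖g t ω‖ ≤ G)
    (Cgrad : ℝ) (hgradbd : ∀ t, ∀ᵐ ω ∂μ, ‖gradient L (φ t ω)‖ ≤ Cgrad) :
    Tendsto (fun t => ∫ ω, ‖gradient L (φ t ω)‖ ^ 2 ∂μ) atTop (nhds 0) := by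
  obtain ⟨m, hm⟩ := hLbdd
  have hgrad : Continuous (gradient L) :=
    (InnerProductSpace.toDual ℝ _).symm.continuous.comp (hLdiff.continuous_fderiv one_ne_zero)
  have hgrad_meas (t : ℕ) : StronglyMeasurable[ℱ t] fun ω => gradient L (φ t ω) :=
    (hgrad.measurable.comp (hφmeas t)).stronglyMeasurable
  have hsq_bound (t : ℕ) : ∀ᵐ ω ∂μ, ‖‖gradient L (φ t ω)‖ ^ 2‖ ≤ Cgrad ^ 2 := by
    filter_upwards [hgradbd t] with ω hω
    rw [norm_pow, norm_norm]
    exact pow_le_pow_left₀ (norm_nonneg _) hω 2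
  have htrunc (R : ℕ) : MeasurableSet[ℱ 0] {ω | L (φ 0 ω) ≤ R} :=
    hLdiff.continuous.measurable.comp (hφmeas 0) measurableSet_Iic
  refine tendsto_integral_of_tendsto_setIntegral
    (fun t => ((hgrad_meas t).mono (ℱ.le t)).aestronglyMeasurable.norm.pow 2)
    hsq_bound (fun R => ℱ.le 0 _ (htrunc R))
    (fun R R' h ω hω => le_trans (α := ℝ) hω (Nat.cast_le.mpr h))
    (Set.iUnion_eq_univ_iff.mpr fun ω => exists_nat_ge (L (φ 0 ω))) fun R => ?_
  exact tendsto_setIntegral_norm_sq_gradient ℱ hLdiff.differentiable_one (fun z => hm ⟨z, rfl⟩)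
    hβ.le hLip hgrad_meas
    (fun t => ((hgmeas t).mono (ℱ.le _) le_rfl).aestronglyMeasurable) (fun t => (hη0 t).le)
    hηdiv hη2 hrec hunb hGbd hgradbd (htrunc R) fun ω hω => hω

/-- **Convergence to stationarity in expected squared gradient norm.** For the
stochastic gradient recursion `φ (t+1) = φ t - η t • g t` with `L` continuously
differentiable, bounded below, with `β`-Lipschitz gradient, diminishing step sizes
`0 < η t ≤ 1/β`, `η t → 0`, `∑ η t = ∞`, `∑ (η t)² < ∞`, conditionally unbiased
estimators `E[g t | ℱ t] = ∇L(φ t)` with conditional variance bound `v`, a.s. norm bound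
`G`, and a.s. gradient bound `‖∇L(φ t)‖ ≤ Cgrad` (compact containment), we have
`lim_t E[‖∇L(φ t)‖²] = 0`. -/
theorem convergence_to_stationarity_in_expectation {d : ℕ}
    {Ω : Type*} {𝒜 : MeasurableSpace Ω} (μ : Measure Ω) [IsProbabilityMeasure μ]
    (ℱ : Filtration ℕ 𝒜)
    (L : EuclideanSpace ℝ (Fin d) → ℝ) (hLdiff : ContDiff ℝ 1 L)
    (hLbdd : BddBelow (Set.range L))
    (β : ℝ) (hβ : 0 < β)
    (hLip : ∀ x y, ‖gradient L x - gradient L y‖ ≤ β * ‖x - y‖)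
    (φ g : ℕ → Ω → EuclideanSpace ℝ (Fin d))
    (hφmeas : ∀ t, Measurable[ℱ t] (φ t))
    (hgmeas : ∀ t, Measurable[ℱ (t + 1)] (g t))
    (η : ℕ → ℝ) (hη0 : ∀ t, 0 < η t) (hηβ : ∀ t, η t ≤ 1 / β)
    (hηlim : Tendsto η atTop (nhds 0))
    (hηdiv : Tendsto (fun n => ∑ t ∈ Finset.range n, η t) atTop atTop)
    (hη2 : Summable fun t => (η t) ^ 2)
    (hrec : ∀ t ω, φ (t + 1) ω = φ t ω - η t • g t ω)
    (v : ℝ) (hv : 0 ≤ v)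
    (hunb : ∀ t, μ[g t | ℱ t] =ᵐ[μ] fun ω => gradient L (φ t ω))
    (hvar : ∀ t, ∀ᵐ ω ∂μ,
      (μ[fun ω' => ‖g t ω' - gradient L (φ t ω')‖ ^ 2 | ℱ t]) ω ≤ v)
    (G : ℝ) (hG : 0 ≤ G) (hGbd : ∀ t, ∀ᵐ ω ∂μ, ‖g t ω‖ ≤ G)
    (Cgrad : ℝ) (hCgrad : 0 ≤ Cgrad)
    (hgradbd : ∀ t, ∀ᵐ ω ∂μ, ‖gradient L (φ t ω)‖ ≤ Cgrad) :
    Tendsto (fun t => ∫ ω, ‖gradient L (φ t ω)‖ ^ 2 ∂μ) atTop (nhds 0) :=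
  convergence_to_stationarity_in_expectation_general μ ℱ L hLdiff hLbdd β hβ hLip φ g hφmeas hgmeas
    η hη0 hηdiv hη2 hrec hunb G hGbd Cgrad hgradbd
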